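/- Let β > 0, let m ≥ 1 and d ≥ 3 be integers, set S = {0,1,…,m} and S′ = {m+d,…,2m+d}, and let A ⊆ S and B ⊆ S′. Suppose Σ_{x ∈ S∖A, y ∈ S′} (y−x)^{−2} ≤ ε₁ and Σ_{x ∈ S, y ∈ S′∖B} (y−x)^{−2} ≤ ε₂ for some ε₁, ε₂ ≥ 0. Then ∏_{x ∈ A, y ∈ B} exp( −β/(y−x)² ) ≤ e^{β(ε₁+ε₂)} · ( d(2m+d) / (m+d)² )^{β(1−2/d)²}. Consequently, under the product measure ν = ν_{p,β}, the probability that all edges {x,y} with x ∈ A and y ∈ B are closed admits the same upper bound. -/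

import Mathlib

/-!
Write `T(X, Y) = ∑_{x ∈ X, y ∈ Y} (y - x)⁻²`. By independence the probability that all edges
between `A` and `B` are closed is `exp (-β T(A, B))`, and deleting the rows `S \ A` and the
columns `S' \ B` of the pedestal costs at most `ε₁ + ε₂`, so `T(A, B) ≥ T(S, S') - ε₁ - ε₂`.
The pedestal sum itself is bounded below by telescoping twice: `1/k² ≥ 1/k - 1/(k+1)` sums over
`y` to `1/(m+d-x) - 1/(2m+d+1-x)`, and comparing `1/k` with `log k - log (k-1)` sums this over
`x` to at least `log ((m+d)² / (d(2m+d)))`. This gives the bound even with exponent `β`; the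
factor `(1 - 2/d)² ≤ 1` in the exponent only weakens it, as the base is at most `1`.
-/

open MeasureTheory ProbabilityTheory

/-- Edge occupation probability: `p` for nearest neighbours, `1 - exp(-β/|x-y|²)` otherwise. -/
noncomputable def edgeProb (p β : ℝ) (x y : ℤ) : ℝ :=
  if (x - y).natAbs = 1 then p else 1 - Real.exp (-β / ((x - y : ℤ) : ℝ) ^ 2)

/-- `ν` is the Bernoulli product measure `ν_{p,β}`. -/
def IsBernoulliEdgeMeasure (p β : ℝ) (ν : Measure (Sym2 ℤ → Bool)) : Prop :=
  iIndepFun (fun e ω => ω e) ν ∧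
    ∀ x y : ℤ, x ≠ y → ν {ω | ω s(x, y) = true} = ENNReal.ofReal (edgeProb p β x y)

open Finset Real

theorem Int.sum_Icc_sub_add_one {M : Type*} [AddCommGroup M] (g : ℤ → M) {a b : ℤ}
    (hab : a ≤ b + 1) : ∑ j ∈ Icc a b, (g j - g (j + 1)) = g a - g (b + 1) := by
  obtain ⟨b, rfl⟩ : ∃ c, b = a - 1 + c := ⟨b - (a - 1), by ring⟩
  lift b to ℕ using by omega
  induction b with
  | zero => simp
  | succ b ih =>
    rw [Nat.cast_succ, ← add_assoc, ← insert_Icc_right_eq_Icc_add_one (by omega),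
      sum_insert (by simp), ih (by omega)]
    abel

theorem inv_sub_inv_add_one_le_inv_sq {c : ℝ} (hc : 0 < c) :
    c⁻¹ - (c + 1)⁻¹ ≤ (c ^ 2)⁻¹ := by
  rw [inv_sub_inv hc.ne' (by positivity), add_sub_cancel_left, one_div]
  gcongr
  nlinarith

theorem Real.log_add_one_sub_log_le_inv {c : ℝ} (hc : 0 < c) :
    log (c + 1) - log c ≤ c⁻¹ := by
  have := log_le_sub_one_of_pos (x := (c + 1) / c) (by positivity)
  rwa [log_div (by positivity) hc.ne', add_div, div_self hc.ne', one_div, add_sub_cancel_left]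
    at this

theorem Real.inv_le_log_sub_log_sub_one {c : ℝ} (hc : 1 < c) :
    c⁻¹ ≤ log c - log (c - 1) := by
  have := one_sub_inv_le_log_of_pos (x := c / (c - 1)) (div_pos (by linarith) (by linarith))
  rwa [log_div (by positivity) (by linarith), inv_div, sub_div, div_self (by positivity),
    sub_sub_cancel, one_div] at this

theorem inv_sub_inv_le_sum_Icc_inv_sq (c : ℝ) {a b : ℤ} (hab : a ≤ b + 1) (hca : c < a) :
    (a - c)⁻¹ - (b + 1 - c)⁻¹ ≤ ∑ y ∈ Icc a b, ((y - c) ^ 2)⁻¹ := by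
  have htel := Int.sum_Icc_sub_add_one (fun y : ℤ ↦ ((y : ℝ) - c)⁻¹) hab
  push_cast at htel
  rw [← htel]
  gcongr with y hy
  have hcy : c < y := hca.trans_le (by exact_mod_cast (mem_Icc.1 hy).1)
  simpa only [sub_add_eq_add_sub] using inv_sub_inv_add_one_le_inv_sq (sub_pos.2 hcy)

theorem log_sub_log_le_sum_Icc_inv (c : ℝ) {a b : ℤ} (hab : a ≤ b + 1) (hbc : b < c) :
    log (c + 1 - a) - log (c - b) ≤ ∑ x ∈ Icc a b, (c - x)⁻¹ := by
  have htel := Int.sum_Icc_sub_add_one (fun x : ℤ ↦ log (c + 1 - x)) hab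
  push_cast at htel
  rw [add_sub_add_right_eq_sub] at htel
  rw [← htel]
  gcongr with x hx
  have hxc : x < c := (show (x : ℝ) ≤ b by exact_mod_cast (mem_Icc.1 hx).2).trans_lt hbc
  simpa only [sub_add_eq_add_sub, add_sub_add_right_eq_sub] using
    log_add_one_sub_log_le_inv (sub_pos.2 hxc)

theorem sum_Icc_inv_le_log_sub_log (c : ℝ) {a b : ℤ} (hab : a ≤ b + 1) (hbc : b + 1 < c) :
    ∑ x ∈ Icc a b, (c - x)⁻¹ ≤ log (c - a) - log (c - (b + 1)) := by
  have htel := Int.sum_Icc_sub_add_one (fun x : ℤ ↦ log (c - x)) hab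
  push_cast at htel
  rw [← htel]
  gcongr with x hx
  have hxb : (x : ℝ) ≤ b := by exact_mod_cast (mem_Icc.1 hx).2
  simpa only [sub_add_eq_sub_sub] using inv_le_log_sub_log_sub_one (by linarith : 1 < c - x)

theorem log_div_le_sum_Icc_sum_Icc_inv_sq (m d : ℕ) (hd : 0 < d) :
    log (((m : ℝ) + d) ^ 2 / (d * (2 * m + d))) ≤
      ∑ x ∈ Icc (0 : ℤ) m, ∑ y ∈ Icc ((m : ℤ) + d) (2 * m + d),
        (((y - x : ℤ) : ℝ) ^ 2)⁻¹ := by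
  have hd' : (0 : ℝ) < d := by exact_mod_cast hd
  have hm : (0 : ℝ) ≤ m := m.cast_nonneg
  have hnear := log_sub_log_le_sum_Icc_inv ((m : ℝ) + d) (a := 0) (b := m) (by omega)
    (by push_cast; linarith)
  have hfar := sum_Icc_inv_le_log_sub_log (2 * (m : ℝ) + d + 1) (a := 0) (b := m) (by omega)
    (by push_cast; linarith)
  push_cast at hnear hfar
  rw [sub_zero, add_sub_cancel_left] at hnear
  rw [sub_zero, show 2 * (m : ℝ) + d + 1 - (m + 1) = m + d by ring] at hfar
  have hinner : ∀ x ∈ Icc (0 : ℤ) m,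
      ((m : ℝ) + d - x)⁻¹ - (2 * (m : ℝ) + d + 1 - x)⁻¹ ≤
        ∑ y ∈ Icc ((m : ℤ) + d) (2 * m + d), (((y - x : ℤ) : ℝ) ^ 2)⁻¹ := fun x hx ↦ by
    have hxm : (x : ℝ) ≤ m := by exact_mod_cast (mem_Icc.1 hx).2
    have := inv_sub_inv_le_sum_Icc_inv_sq (x : ℝ) (a := m + d) (b := 2 * m + d) (by omega)
      (by push_cast; linarith)
    push_cast at this ⊢
    exact this
  -- `(m + d + 1)(2m + d) - (m + d)(2m + d + 1) = m ≥ 0`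
  have hcross : log ((m + d) * (2 * m + d + 1)) ≤ log ((m + d + 1) * (2 * m + d)) :=
    log_le_log (by positivity) (by nlinarith)
  rw [log_mul (by positivity) (by positivity), log_mul (by positivity) (by positivity)] at hcross
  calc log (((m : ℝ) + d) ^ 2 / (d * (2 * m + d)))
      ≤ (log (m + d + 1) - log d) - (log (2 * m + d + 1) - log (m + d)) := by
        rw [log_div (by positivity) (by positivity), log_mul (by positivity) (by positivity),
          log_pow]
        push_cast
        linarith
    _ ≤ ∑ x ∈ Icc (0 : ℤ) m, ((m : ℝ) + d - x)⁻¹ -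
          ∑ x ∈ Icc (0 : ℤ) m, (2 * (m : ℝ) + d + 1 - x)⁻¹ :=
        sub_le_sub hnear hfar
    _ ≤ _ := by
        rw [← sum_sub_distrib]
        exact sum_le_sum hinner

theorem Finset.sum_sum_le_sum_sdiff_add {α γ M : Type*} [DecidableEq α] [DecidableEq γ]
    [AddCommMonoid M] [PartialOrder M] [IsOrderedAddMonoid M] {f : α → γ → M}
    (hf : ∀ x y, 0 ≤ f x y) {S A : Finset α} {T B : Finset γ} (hA : A ⊆ S) (hB : B ⊆ T) :
    ∑ x ∈ S, ∑ y ∈ T, f x y ≤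
      ∑ x ∈ S \ A, ∑ y ∈ T, f x y + ∑ x ∈ S, ∑ y ∈ T \ B, f x y +
        ∑ x ∈ A, ∑ y ∈ B, f x y := by
  calc ∑ x ∈ S, ∑ y ∈ T, f x y
      = ∑ x ∈ S \ A, ∑ y ∈ T, f x y +
          (∑ x ∈ A, ∑ y ∈ T \ B, f x y + ∑ x ∈ A, ∑ y ∈ B, f x y) := by
        rw [← sum_add_distrib, ← sum_sdiff hA]
        simp only [sum_sdiff hB]
    _ ≤ _ := by
        rw [← add_assoc]
        gcongr
        exact fun x _ _ ↦ sum_nonneg fun y _ ↦ hf x y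

theorem Real.exp_neg_mul_le_exp_mul_mul_rpow {β T ε b θ : ℝ} (hβ : 0 ≤ β) (hb0 : 0 < b)
    (hb1 : b ≤ 1) (hθ : θ ≤ 1) (hT : -log b - ε ≤ T) :
    exp (-β * T) ≤ exp (β * ε) * b ^ (β * θ) :=
  calc exp (-β * T)
      ≤ exp (β * ε + log b * β) := exp_le_exp.2 (by nlinarith)
    _ = exp (β * ε) * b ^ β := by rw [exp_add, rpow_def_of_pos hb0]
    _ ≤ exp (β * ε) * b ^ (β * θ) := mul_le_mul_of_nonneg_left
        (rpow_le_rpow_of_exponent_ge hb0 hb1 (mul_le_of_le_one_right hβ hθ)) (exp_pos _).le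

namespace IsBernoulliEdgeMeasure

variable {p β : ℝ} {ν : Measure (Sym2 ℤ → Bool)}

theorem measure_closed (hν : IsBernoulliEdgeMeasure p β ν) (hβ : 0 ≤ β) {x y : ℤ}
    (hxy : 2 ≤ (x - y).natAbs) :
    ν {ω | ω s(x, y) = false} = ENNReal.ofReal (exp (-β / ((y - x : ℤ) : ℝ) ^ 2)) := by
  have := hν.1.isProbabilityMeasure
  have hcompl : {ω : Sym2 ℤ → Bool | ω s(x, y) = false} = {ω | ω s(x, y) = true}ᶜ := by
    ext; simp
  have hle : exp (-β / ((y - x : ℤ) : ℝ) ^ 2) ≤ 1 :=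
    exp_le_one_iff.2 (div_nonpos_of_nonpos_of_nonneg (neg_nonpos.2 hβ) (sq_nonneg _))
  have hmeas : MeasurableSet {ω : Sym2 ℤ → Bool | ω s(x, y) = true} :=
    (measurableSet_singleton true).preimage (measurable_pi_apply _)
  rw [hcompl, prob_compl_eq_one_sub hmeas,
    hν.2 x y (by omega), edgeProb, if_neg (by omega), ← neg_sub y x, Int.cast_neg, neg_sq,
    ← ENNReal.ofReal_one, ← ENNReal.ofReal_sub _ (sub_nonneg.2 hle), sub_sub_cancel]

theorem measure_forall_closed (hν : IsBernoulliEdgeMeasure p β ν) (hβ : 0 ≤ β)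
    {A B : Finset ℤ} (hAB : ∀ x ∈ A, ∀ y ∈ B, x + 2 ≤ y) :
    ν {ω | ∀ x ∈ A, ∀ y ∈ B, ω s(x, y) = false} =
      ENNReal.ofReal (∏ x ∈ A, ∏ y ∈ B, exp (-β / ((y - x : ℤ) : ℝ) ^ 2)) := by
  have hinj : Set.InjOn (fun q : ℤ × ℤ ↦ s(q.1, q.2)) (A ×ˢ B : Finset _) := by
    rintro ⟨x₁, y₁⟩ h₁ ⟨x₂, y₂⟩ h₂ heq
    simp only [coe_product, Set.mem_prod, mem_coe] at h₁ h₂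
    have := hAB _ h₁.1 _ h₂.2
    have := hAB _ h₂.1 _ h₁.2
    rcases Sym2.eq_iff.1 heq with ⟨rfl, rfl⟩ | ⟨rfl, rfl⟩ <;> first | rfl | omega
  have hset : {ω : Sym2 ℤ → Bool | ∀ x ∈ A, ∀ y ∈ B, ω s(x, y) = false} =
      ⋂ e ∈ (A ×ˢ B).image (fun q ↦ s(q.1, q.2)), {ω | ω e = false} := by
    ext ω
    simp only [Set.mem_ofPred_eq, Set.mem_iInter, mem_image, mem_product, Prod.exists]
    exact ⟨fun h _ ⟨x, y, ⟨hx, hy⟩, he⟩ ↦ he ▸ h x hx y hy,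
      fun h x hx y hy ↦ h _ ⟨x, y, ⟨hx, hy⟩, rfl⟩⟩
  rw [hset, hν.1.meas_biInter (s := fun e ↦ {ω | ω e = false}) fun _ _ ↦ ⟨{false}, trivial, rfl⟩,
    prod_image hinj, prod_product,
    ENNReal.ofReal_prod_of_nonneg fun _ _ ↦ prod_nonneg fun _ _ ↦ (exp_pos _).le]
  refine prod_congr rfl fun x hx ↦ ?_
  rw [ENNReal.ofReal_prod_of_nonneg fun _ _ ↦ (exp_pos _).le]
  exact prod_congr rfl fun y hy ↦ hν.measure_closed hβ (by have := hAB x hx y hy; omega)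

end IsBernoulliEdgeMeasure

theorem pedestal_closed_edges_estimate_general (β p : ℝ) (hβ : 0 < β)
    (m d : ℕ) (hd : 3 ≤ d)
    (A B : Finset ℤ)
    (hA : A ⊆ Finset.Icc (0 : ℤ) (m : ℤ))
    (hB : B ⊆ Finset.Icc ((m : ℤ) + (d : ℤ)) (2 * (m : ℤ) + (d : ℤ)))
    (ε₁ ε₂ : ℝ)
    (h₁ : (∑ x ∈ Finset.Icc (0 : ℤ) (m : ℤ) \ A,
        ∑ y ∈ Finset.Icc ((m : ℤ) + (d : ℤ)) (2 * (m : ℤ) + (d : ℤ)),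
          (((y - x : ℤ) : ℝ) ^ 2)⁻¹) ≤ ε₁)
    (h₂ : (∑ x ∈ Finset.Icc (0 : ℤ) (m : ℤ),
        ∑ y ∈ Finset.Icc ((m : ℤ) + (d : ℤ)) (2 * (m : ℤ) + (d : ℤ)) \ B,
          (((y - x : ℤ) : ℝ) ^ 2)⁻¹) ≤ ε₂)
    (ν : Measure (Sym2 ℤ → Bool))
    (hν : IsBernoulliEdgeMeasure p β ν) :
    (∏ x ∈ A, ∏ y ∈ B, Real.exp (-β / ((y - x : ℤ) : ℝ) ^ 2)) ≤
      Real.exp (β * (ε₁ + ε₂)) *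
        ((d : ℝ) * (2 * (m : ℝ) + (d : ℝ)) / ((m : ℝ) + (d : ℝ)) ^ 2) ^
          (β * (1 - 2 / (d : ℝ)) ^ 2) ∧
    ν {ω | ∀ x ∈ A, ∀ y ∈ B, ω s(x, y) = false} ≤
      ENNReal.ofReal
        (Real.exp (β * (ε₁ + ε₂)) *
          ((d : ℝ) * (2 * (m : ℝ) + (d : ℝ)) / ((m : ℝ) + (d : ℝ)) ^ 2) ^
            (β * (1 - 2 / (d : ℝ)) ^ 2)) := by
  have hd1 : (1 : ℝ) ≤ d := by exact_mod_cast (by omega : 1 ≤ d)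
  have hsum : -log ((d : ℝ) * (2 * m + d) / (m + d) ^ 2) - (ε₁ + ε₂) ≤
      ∑ x ∈ A, ∑ y ∈ B, (((y - x : ℤ) : ℝ) ^ 2)⁻¹ := by
    have hsplit := sum_sum_le_sum_sdiff_add (f := fun x y : ℤ ↦ (((y - x : ℤ) : ℝ) ^ 2)⁻¹)
      (fun _ _ ↦ by positivity) hA hB
    have hlog := log_div_le_sum_Icc_sum_Icc_inv_sq m d (by omega)
    rw [← log_inv, inv_div]
    linarith
  have hprod : ∏ x ∈ A, ∏ y ∈ B, exp (-β / ((y - x : ℤ) : ℝ) ^ 2) =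
      exp (-β * ∑ x ∈ A, ∑ y ∈ B, (((y - x : ℤ) : ℝ) ^ 2)⁻¹) := by
    simp_rw [mul_sum, exp_sum, div_eq_mul_inv]
  have hθ : (1 - 2 / (d : ℝ)) ^ 2 ≤ 1 :=
    (sq_le_one_iff_abs_le_one _).2 (abs_le.2 ⟨by linarith [div_le_self zero_le_two hd1],
      by linarith [div_nonneg zero_le_two (zero_le_one.trans hd1)]⟩)
  have hbound := hprod ▸ exp_neg_mul_le_exp_mul_mul_rpow hβ.le (by positivity)
    ((div_le_one (by positivity)).2 (by nlinarith)) hθ hsum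
  refine ⟨hbound, ?_⟩
  rw [hν.measure_forall_closed hβ.le fun x hx y hy ↦ by
    have := mem_Icc.1 (hA hx); have := mem_Icc.1 (hB hy); omega]
  exact ENNReal.ofReal_le_ofReal hbound

/-- Pedestal version of the closed-edge estimate: with `S = {0,…,m}`, `S' = {m+d,…,2m+d}`,
`d ≥ 3`, `A ⊆ S`, `B ⊆ S'` such that the removed sums are at most `ε₁`, `ε₂`, the probability
that all edges between `A` and `B` are closed is at most
`e^{β(ε₁+ε₂)} (d(2m+d)/(m+d)²)^{β(1-2/d)²}`. -/
theorem pedestal_closed_edges_estimate (β p : ℝ) (hβ : 0 < β) (hp0 : 0 < p) (hp1 : p < 1)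
    (m d : ℕ) (hm : 1 ≤ m) (hd : 3 ≤ d)
    (A B : Finset ℤ)
    (hA : A ⊆ Finset.Icc (0 : ℤ) (m : ℤ))
    (hB : B ⊆ Finset.Icc ((m : ℤ) + (d : ℤ)) (2 * (m : ℤ) + (d : ℤ)))
    (ε₁ ε₂ : ℝ) (hε₁ : 0 ≤ ε₁) (hε₂ : 0 ≤ ε₂)
    (h₁ : (∑ x ∈ Finset.Icc (0 : ℤ) (m : ℤ) \ A,
        ∑ y ∈ Finset.Icc ((m : ℤ) + (d : ℤ)) (2 * (m : ℤ) + (d : ℤ)),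
          (((y - x : ℤ) : ℝ) ^ 2)⁻¹) ≤ ε₁)
    (h₂ : (∑ x ∈ Finset.Icc (0 : ℤ) (m : ℤ),
        ∑ y ∈ Finset.Icc ((m : ℤ) + (d : ℤ)) (2 * (m : ℤ) + (d : ℤ)) \ B,
          (((y - x : ℤ) : ℝ) ^ 2)⁻¹) ≤ ε₂)
    (ν : Measure (Sym2 ℤ → Bool)) [IsProbabilityMeasure ν]
    (hν : IsBernoulliEdgeMeasure p β ν) :
    (∏ x ∈ A, ∏ y ∈ B, Real.exp (-β / ((y - x : ℤ) : ℝ) ^ 2)) ≤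
      Real.exp (β * (ε₁ + ε₂)) *
        ((d : ℝ) * (2 * (m : ℝ) + (d : ℝ)) / ((m : ℝ) + (d : ℝ)) ^ 2) ^
          (β * (1 - 2 / (d : ℝ)) ^ 2) ∧
    ν {ω | ∀ x ∈ A, ∀ y ∈ B, ω s(x, y) = false} ≤
      ENNReal.ofReal
        (Real.exp (β * (ε₁ + ε₂)) *
          ((d : ℝ) * (2 * (m : ℝ) + (d : ℝ)) / ((m : ℝ) + (d : ℝ)) ^ 2) ^
            (β * (1 - 2 / (d : ℝ)) ^ 2)) :=
  pedestal_closed_edges_estimate_general β p hβ m d hd A B hA hB ε₁ ε₂ h₁ h₂ ν hν
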